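/- Let G be a graph and let m be a positive multiple of 3. If H is obtained from G and the path P_m by joining a pendant vertex of P_m to a vertex of G by an edge, then m_H(1) = m_G(1). -/

import Mathlib

open SimpleGraph Matrix Polynomial

/-- The Laplacian matrix of a simple graph over `ℝ`. -/
noncomputable def lapR {V : Type} [Fintype V] [DecidableEq V] (G : SimpleGraph V) :
    Matrix V V ℝ :=
  letI := Classical.decRel G.Adj
  G.lapMatrix ℝ

/-- The multiset of Laplacian eigenvalues of a graph, counted with multiplicity,
given as the roots of the characteristic polynomial of the Laplacian matrix. -/
noncomputable def lapEigs {V : Type} [Fintype V] [DecidableEq V] (G : SimpleGraph V) :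
    Multiset ℝ :=
  (lapR G).charpoly.roots

/-- `m_G[0,1)`: the number of Laplacian eigenvalues of `G` in `[0,1)`, with multiplicity. -/
noncomputable def mIco01 {V : Type} [Fintype V] [DecidableEq V] (G : SimpleGraph V) : ℕ :=
  letI : DecidablePred (fun x : ℝ => 0 ≤ x ∧ x < 1) := Classical.decPred _
  Multiset.card ((lapEigs G).filter (fun x => 0 ≤ x ∧ x < 1))

/-- `m_G(μ)`: the multiplicity of `μ` as a Laplacian eigenvalue of `G`. -/
noncomputable def mEig {V : Type} [Fintype V] [DecidableEq V] (G : SimpleGraph V) (μ : ℝ) : ℕ :=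
  Multiset.count μ (lapEigs G)

/-- The graph obtained from `G` and the path `P_m` by joining a pendant (end) vertex of `P_m`
to the vertex `v` of `G` by an edge. The path vertices are `Sum.inr 0, …, Sum.inr (m-1)` with
edges `i ↔ i+1`, and the new edge joins `Sum.inl v` to the end vertex `Sum.inr 0`. -/
def attachPath {V : Type} (G : SimpleGraph V) (v : V) (m : ℕ) : SimpleGraph (V ⊕ Fin m) :=
  SimpleGraph.fromRel (fun a b =>
    (∃ x y : V, a = Sum.inl x ∧ b = Sum.inl y ∧ G.Adj x y) ∨
    (∃ i j : Fin m, a = Sum.inr i ∧ b = Sum.inr j ∧ (i : ℕ) + 1 = (j : ℕ)) ∨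
    (∃ i : Fin m, a = Sum.inl v ∧ b = Sum.inr i ∧ (i : ℕ) = 0))

/-!
Let `x` be a Laplacian eigenvector of `H` for the eigenvalue `1`, and read its values along
`v, p₀, p₁, …, p_{m-1}`. The eigenvalue equation at an interior path vertex is the recurrence
`x_{k+1} = x_k - x_{k-1}`, which gives `x_{k+3} = -x_k`, and at the end vertex it says that the
second-to-last value vanishes. When `3 ∣ m` these force `x_{p₀} = x_v`, so the pendant edge
contributes nothing to the equation at `v`, and restriction to `G` is an isomorphism of the
`1`-eigenspaces; its inverse extends `y` by `y_v · (1, 0, -1, -1, 0, 1, …)` along the path.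
The Laplacian being symmetric, multiplicities are dimensions of eigenspaces.
-/

theorem Matrix.IsHermitian.count_roots_charpoly_eq_finrank_eigenspace {𝕜 n : Type*} [RCLike 𝕜]
    [Fintype n] [DecidableEq n] {A : Matrix n n 𝕜} (hA : A.IsHermitian) (μ : 𝕜) :
    A.charpoly.roots.count μ = Module.finrank 𝕜 (Module.End.eigenspace (toLin' A) μ) := by
  have hT := isSymmetric_toEuclideanLin_iff.mpr hA
  have hspace : Module.End.eigenspace (toEuclideanLin A) μ ≃ₗ[𝕜]
      Module.End.eigenspace (toLin' A) μ :=
    (WithLp.linearEquiv 2 𝕜 (n → 𝕜)).ofSubmodules _ _ (by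
      ext x
      simp only [Submodule.mem_map, Module.End.mem_eigenspace_iff]
      constructor
      · rintro ⟨y, hy, rfl⟩
        simpa using congrArg WithLp.ofLp hy
      · intro hx
        exact ⟨WithLp.toLp 2 x, by simpa using congrArg (WithLp.toLp 2) hx, rfl⟩)
  rw [hA.roots_charpoly_eq_eigenvalues₀, Multiset.count_map, ← hspace.finrank_eq,
    ← hT.card_filter_eigenvalues_eq finrank_euclideanSpace μ]
  simp [eq_comm]
  rfl

lemma Matrix.mem_eigenspace_one_toLin'_iff {R n : Type*} [CommRing R] [Fintype n] [DecidableEq n]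
    {A : Matrix n n R} {x : n → R} :
    x ∈ Module.End.eigenspace (toLin' A) 1 ↔ A *ᵥ x = x := by
  simp

lemma Fin.sum_ite_val_eq {M : Type*} [AddCommMonoid M] {m : ℕ} (c : ℕ) (f : Fin m → M) :
    (∑ j : Fin m, if (j : ℕ) = c then f j else 0) = if h : c < m then f ⟨c, h⟩ else 0 := by
  split_ifs with h
  · rw [Fintype.sum_eq_single ⟨c, h⟩ fun j hj => if_neg fun e => hj (Fin.ext e), if_pos rfl]
  · exact Finset.sum_eq_zero fun j _ => if_neg (by omega)

lemma Fin.sum_ite_val_eq_or {M : Type*} [AddCommMonoid M] {m : ℕ} {c d : ℕ} (hcd : c ≠ d)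
    (f : Fin m → M) :
    (∑ j : Fin m, if (j : ℕ) = c ∨ (j : ℕ) = d then f j else 0) =
      (if h : c < m then f ⟨c, h⟩ else 0) + if h : d < m then f ⟨d, h⟩ else 0 := by
  rw [← Fin.sum_ite_val_eq, ← Fin.sum_ite_val_eq, ← Finset.sum_add_distrib]
  refine Finset.sum_congr rfl fun j _ => ?_
  by_cases hc : (j : ℕ) = c <;> by_cases hd : (j : ℕ) = d <;> simp_all

section Recurrence

variable {m : ℕ} {s t : ℕ → ℝ}

lemma eq_of_sub_recurrence (hs : ∀ k, k + 2 ≤ m → s (k + 2) = s (k + 1) - s k)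
    (ht : ∀ k, k + 2 ≤ m → t (k + 2) = t (k + 1) - t k) (h0 : s 0 = t 0) (h1 : s 1 = t 1) :
    ∀ k ≤ m, s k = t k
  | 0, _ => h0
  | 1, _ => h1
  | k + 2, hk => by
    rw [hs k hk, ht k hk, eq_of_sub_recurrence hs ht h0 h1 k (by omega),
      eq_of_sub_recurrence hs ht h0 h1 (k + 1) (by omega)]

lemma sub_recurrence_three_mul_add_two (hs : ∀ k, k + 2 ≤ m → s (k + 2) = s (k + 1) - s k) :
    ∀ n, 3 * n + 2 ≤ m → s (3 * n + 2) = (-1) ^ n * (s 1 - s 0)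
  | 0, h => by simpa using hs 0 h
  | n + 1, h => by
    have h4 : s (3 * n + 4) = s (3 * n + 3) - s (3 * n + 2) := hs (3 * n + 2) (by omega)
    have h5 : s (3 * n + 5) = s (3 * n + 4) - s (3 * n + 3) := hs (3 * n + 3) (by omega)
    rw [show 3 * (n + 1) + 2 = 3 * n + 5 by ring, h5, h4,
      sub_recurrence_three_mul_add_two hs n (by omega)]
    ring

end Recurrence

-- `1, 1, 0, -1, -1, 0, …`: the values along `v, p₀, p₁, …` of an extended eigenvector.
def pathProfile : ℕ → ℝ
  | 0 => 1
  | 1 => 1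
  | k + 2 => pathProfile (k + 1) - pathProfile k

lemma pathProfile_three_mul_add_two (n : ℕ) : pathProfile (3 * n + 2) = 0 := by
  rw [sub_recurrence_three_mul_add_two (s := pathProfile) (m := 3 * n + 2) (fun k _ => rfl) n
    le_rfl]
  simp [pathProfile]

open scoped Classical in
lemma lapR_mulVec_apply {V : Type} [Fintype V] [DecidableEq V] (G : SimpleGraph V)
    (x : V → ℝ) (i : V) :
    (lapR G *ᵥ x) i = ∑ j, if G.Adj i j then x i - x j else 0 := by
  simp [lapR, lapMatrix_mulVec_apply, SimpleGraph.degree, neighborFinset_eq_filter,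
    Finset.sum_ite, Finset.sum_sub_distrib]

lemma isHermitian_lapR {V : Type} [Fintype V] [DecidableEq V] (G : SimpleGraph V) :
    (lapR G).IsHermitian := by
  classical
  exact G.isHermitian_lapMatrix ℝ

namespace attachPath

variable {V : Type} (G : SimpleGraph V) (v : V) {m : ℕ}

@[simp] lemma adj_inl_inl (a b : V) :
    (attachPath G v m).Adj (.inl a) (.inl b) ↔ G.Adj a b := by
  simp only [attachPath, fromRel_adj]
  grind [G.adj_comm, G.ne_of_adj]

@[simp] lemma adj_inl_inr (a : V) (i : Fin m) :
    (attachPath G v m).Adj (.inl a) (.inr i) ↔ a = v ∧ (i : ℕ) = 0 := by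
  simp [attachPath]

@[simp] lemma adj_inr_inl (a : V) (i : Fin m) :
    (attachPath G v m).Adj (.inr i) (.inl a) ↔ a = v ∧ (i : ℕ) = 0 := by
  rw [adj_comm, adj_inl_inr]

@[simp] lemma adj_inr_inr (i j : Fin m) :
    (attachPath G v m).Adj (.inr i) (.inr j) ↔ (i : ℕ) + 1 = j ∨ (j : ℕ) + 1 = i := by
  simp [attachPath]
  omega

-- Index `0` is `v` and index `k + 1` is the path vertex `k`; the junk value is `0`.
def pathValues (x : V ⊕ Fin m → ℝ) : ℕ → ℝ
  | 0 => x (.inl v)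
  | k + 1 => if h : k < m then x (.inr ⟨k, h⟩) else 0

lemma pathValues_succ (x : V ⊕ Fin m → ℝ) (i : Fin m) :
    pathValues v x (i + 1) = x (.inr i) := by
  simp [pathValues]

def extend (y : V → ℝ) : V ⊕ Fin m → ℝ :=
  Sum.elim y fun i => pathProfile (i + 1) * y v

lemma pathValues_extend (y : V → ℝ) :
    ∀ k ≤ m, pathValues v (extend v y : V ⊕ Fin m → ℝ) k = pathProfile k * y v
  | 0, _ => by simp [pathValues, extend, pathProfile]
  | k + 1, hk => by simp [pathValues, extend, show k < m by omega]

variable [Fintype V] [DecidableEq V]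

open scoped Classical in
lemma lapR_mulVec_inl (hm : 0 < m) (x : V ⊕ Fin m → ℝ) (a : V) :
    (lapR (attachPath G v m) *ᵥ x) (.inl a) =
      (lapR G *ᵥ (x ∘ .inl)) a + if a = v then x (.inl v) - x (.inr ⟨0, hm⟩) else 0 := by
  rw [lapR_mulVec_apply, lapR_mulVec_apply, Fintype.sum_sum_type]
  by_cases ha : a = v <;> simp [ha, Fin.sum_ite_val_eq, hm]

open scoped Classical in
lemma lapR_mulVec_inr (x : V ⊕ Fin m → ℝ) (i : Fin m) :
    (lapR (attachPath G v m) *ᵥ x) (.inr i) =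
      (pathValues v x (i + 1) - pathValues v x i) +
        if (i : ℕ) + 1 < m then pathValues v x (i + 1) - pathValues v x (i + 2) else 0 := by
  rw [lapR_mulVec_apply, Fintype.sum_sum_type]
  obtain ⟨i, hi⟩ := i
  cases i with
  | zero =>
    simp [pathValues, hi, eq_comm (a := 1), Fin.sum_ite_val_eq]
    split_ifs <;> rfl
  | succ i =>
    have hadj (j : Fin m) : (attachPath G v m).Adj (.inr ⟨i + 1, hi⟩) (.inr j) ↔
        (j : ℕ) = i + 2 ∨ (j : ℕ) = i := by
      simp only [adj_inr_inr]; omega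
    simp only [hadj, Fin.sum_ite_val_eq_or (show i + 2 ≠ i by omega)]
    simp [pathValues, hi, Nat.lt_of_succ_lt hi]
    split_ifs <;> ring

section EigenvalueOne

variable {G v} {x : V ⊕ Fin m → ℝ} (hx : lapR (attachPath G v m) *ᵥ x = x)
include hx

lemma pathValues_sub_recurrence : ∀ k, k + 2 ≤ m →
    pathValues v x (k + 2) = pathValues v x (k + 1) - pathValues v x k := by
  intro k hk
  have hk' := congrFun hx (.inr ⟨k, by omega⟩)
  rw [lapR_mulVec_inr, ← pathValues_succ v x] at hk'
  simp only [show k + 1 < m by omega, ↓reduceIte] at hk'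
  linarith

lemma pathValues_pred_eq_zero (hm : 0 < m) : pathValues v x (m - 1) = 0 := by
  have hend := congrFun hx (.inr ⟨m - 1, by omega⟩)
  rw [lapR_mulVec_inr, if_neg (by simp; omega), ← pathValues_succ v x] at hend
  simpa using hend

lemma pathValues_one (hm : 0 < m) (h3 : 3 ∣ m) : pathValues v x 1 = pathValues v x 0 := by
  obtain ⟨n, rfl⟩ : ∃ n, m = 3 * n + 3 := ⟨m / 3 - 1, by omega⟩
  have hend := pathValues_pred_eq_zero hx hm
  rw [show 3 * n + 3 - 1 = 3 * n + 2 by omega,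
    sub_recurrence_three_mul_add_two (pathValues_sub_recurrence hx) n (by omega)] at hend
  linarith [(mul_eq_zero.1 hend).resolve_left (pow_ne_zero _ (by norm_num))]

lemma pathValues_eq_pathProfile_mul (hm : 0 < m) (h3 : 3 ∣ m) :
    ∀ k ≤ m, pathValues v x k = pathProfile k * x (.inl v) := by
  refine eq_of_sub_recurrence (pathValues_sub_recurrence hx) (fun k _ => ?_) ?_ ?_
  · simp only [pathProfile]; ring
  · simp [pathValues, pathProfile]
  · rw [pathValues_one hx hm h3]; simp [pathValues, pathProfile]

lemma apply_inr (hm : 0 < m) (h3 : 3 ∣ m) (i : Fin m) :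
    x (.inr i) = pathProfile (i + 1) * x (.inl v) := by
  rw [← pathValues_succ v x, pathValues_eq_pathProfile_mul hx hm h3 _ (by omega)]

lemma lapR_mulVec_comp_inl (hm : 0 < m) (h3 : 3 ∣ m) :
    lapR G *ᵥ (x ∘ .inl) = x ∘ .inl := by
  funext a
  have ha := congrFun hx (.inl a)
  have h0 : x (.inr ⟨0, hm⟩) = x (.inl v) := by
    simpa [pathValues, hm] using pathValues_one hx hm h3
  rwa [lapR_mulVec_inl _ _ hm, h0, sub_self, ite_self, add_zero] at ha

end EigenvalueOne

lemma lapR_mulVec_extend (hm : 0 < m) (h3 : 3 ∣ m) {y : V → ℝ} (hy : lapR G *ᵥ y = y) :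
    lapR (attachPath G v m) *ᵥ extend v y = extend v y := by
  funext u
  rcases u with a | i
  · rw [lapR_mulVec_inl _ _ hm]
    simp [extend, hy, pathProfile]
  · rw [lapR_mulVec_inr, pathValues_extend v y ((i : ℕ) + 1) i.isLt,
      pathValues_extend v y _ (by omega)]
    split_ifs with hi
    · rw [pathValues_extend v y ((i : ℕ) + 2) hi]
      simp only [extend, Sum.elim_inr, pathProfile]
      ring
    · obtain ⟨n, hn⟩ : ∃ n, (i : ℕ) = 3 * n + 2 := ⟨m / 3 - 1, by omega⟩
      simp [extend, hn, pathProfile_three_mul_add_two]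

end attachPath

open Module.End in
noncomputable def attachPathEigenspaceOneEquiv {V : Type} [Fintype V] [DecidableEq V]
    (G : SimpleGraph V) (v : V) {m : ℕ} (hm : 0 < m) (h3 : 3 ∣ m) :
    eigenspace (toLin' (lapR (attachPath G v m))) 1 ≃ₗ[ℝ] eigenspace (toLin' (lapR G)) 1 where
  toFun x := ⟨x.1 ∘ .inl, mem_eigenspace_one_toLin'_iff.2 <|
    attachPath.lapR_mulVec_comp_inl (mem_eigenspace_one_toLin'_iff.1 x.2) hm h3⟩
  invFun y := ⟨attachPath.extend v y.1, mem_eigenspace_one_toLin'_iff.2 <|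
    attachPath.lapR_mulVec_extend G v hm h3 (mem_eigenspace_one_toLin'_iff.1 y.2)⟩
  map_add' _ _ := rfl
  map_smul' _ _ := rfl
  left_inv x := by
    ext (a | i)
    · rfl
    · exact (attachPath.apply_inr (mem_eigenspace_one_toLin'_iff.1 x.2) hm h3 i).symm
  right_inv _ := rfl

/-- Attaching a path `P_m`, with `m` a positive multiple of `3`, by an edge to a vertex of
`G` does not change the multiplicity of `1` as a Laplacian eigenvalue. -/
theorem attach_Pm_eigenvalue_one {V : Type} [Fintype V] [DecidableEq V]
    (G : SimpleGraph V) (v : V) (m : ℕ) (hm : 0 < m) (h3 : 3 ∣ m) :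
    mEig (attachPath G v m) 1 = mEig G 1 := by
  simp only [mEig, lapEigs, (isHermitian_lapR _).count_roots_charpoly_eq_finrank_eigenspace]
  exact (attachPathEigenspaceOneEquiv G v hm h3).finrank_eq
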